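/- arXiv:2110.13224 — 3 statements merged into one kernel-verified Lean document; each statement's English description precedes it below -/
import Mathlib

section
/- Let J be an invertible 2×2 matrix, Φ̂ : ℝ² → ℝ² a vector field on reference coordinates, and Φ = (1/det J) J (Φ̂ ∘ F⁻¹) its contravariant Piola image under the affine map F with Jacobian J. If e = J ê is an edge with normals n, n̂ as above, then at corresponding points x = F(x̂): ‖e‖ (Φ(x) · n) = ‖ê‖ (Φ̂(x̂) · n̂). -/
/-!
In two dimensions `Jᵀ R J = (det J) R` for the quarter-turn `R`, i.e. `R J = (det J) J⁻ᵀ R`: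
rotating the mapped edge `J ê` is the cofactor (normal) transform of the rotated edge. Hence
`Φ(x) · R e = (det J)⁻¹ (J Φ̂(x̂)) · R (J ê) = Φ̂(x̂) · R ê`, and multiplying the unit normals
by the edge lengths just undoes the normalisations.
-/

open Matrix

/-- Clockwise rotation by 90 degrees. -/
def Rrot : Matrix (Fin 2) (Fin 2) ℝ := !![0, 1; -1, 0]

/-- Euclidean norm of a vector in ℝ². -/
noncomputable def enorm2 (v : Fin 2 → ℝ) : ℝ := Real.sqrt (v ⬝ᵥ v)

lemma enorm2_eq_zero {v : Fin 2 → ℝ} : enorm2 v = 0 ↔ v = 0 := by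
  have hnonneg : 0 ≤ v ⬝ᵥ v := Finset.sum_nonneg fun i _ => mul_self_nonneg (v i)
  rw [enorm2, Real.sqrt_eq_zero hnonneg, dotProduct_self_eq_zero]

lemma enorm2_mul_dotProduct_mulVec_inv_smul (A : Matrix (Fin 2) (Fin 2) ℝ) (w v : Fin 2 → ℝ) :
    enorm2 v * (w ⬝ᵥ A *ᵥ ((enorm2 v)⁻¹ • v)) = w ⬝ᵥ A *ᵥ v := by
  by_cases hv : v = 0
  · simp [hv]
  · rw [mulVec_smul, dotProduct_smul, smul_eq_mul, mul_inv_cancel_left₀ (enorm2_eq_zero.not.2 hv)]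

lemma transpose_mul_Rrot_mul_self (J : Matrix (Fin 2) (Fin 2) ℝ) :
    Jᵀ * Rrot * J = J.det • Rrot := by
  ext i j
  fin_cases i <;> fin_cases j <;> simp [Rrot, mul_apply, Fin.sum_univ_two, det_fin_two] <;> ring

lemma mulVec_dotProduct_Rrot_mulVec (J : Matrix (Fin 2) (Fin 2) ℝ) (u v : Fin 2 → ℝ) :
    J *ᵥ u ⬝ᵥ Rrot *ᵥ J *ᵥ v = J.det * (u ⬝ᵥ Rrot *ᵥ v) := by
  rw [← vecMul_transpose, ← dotProduct_mulVec, mulVec_mulVec, mulVec_mulVec,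
    transpose_mul_Rrot_mul_self, smul_mulVec, dotProduct_smul, smul_eq_mul]

theorem stmt_3_general (J : Matrix (Fin 2) (Fin 2) ℝ) (b : Fin 2 → ℝ)
    (hJ : IsUnit J.det)
    (Phihat Phi : (Fin 2 → ℝ) → (Fin 2 → ℝ))
    (hPiola : ∀ y : Fin 2 → ℝ, Phi (J *ᵥ y + b) = (J.det)⁻¹ • (J *ᵥ Phihat y))
    (ehat e that t nhat n : Fin 2 → ℝ)
    (he : e = J *ᵥ ehat)
    (hthat : that = (enorm2 ehat)⁻¹ • ehat)
    (ht : t = (enorm2 e)⁻¹ • e)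
    (hnhat : nhat = Rrot *ᵥ that)
    (hn : n = Rrot *ᵥ t)
    (xhat x : Fin 2 → ℝ)
    (hx : x = J *ᵥ xhat + b) :
    enorm2 e * (Phi x ⬝ᵥ n) = enorm2 ehat * (Phihat xhat ⬝ᵥ nhat) := by
  subst hn ht hnhat hthat hx
  rw [enorm2_mul_dotProduct_mulVec_inv_smul, enorm2_mul_dotProduct_mulVec_inv_smul, hPiola, he,
    smul_dotProduct, mulVec_dotProduct_Rrot_mulVec, smul_eq_mul, inv_mul_cancel_left₀ hJ.ne_zero]

theorem stmt_3 (J : Matrix (Fin 2) (Fin 2) ℝ) (b : Fin 2 → ℝ)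
    (hJ : IsUnit J.det)
    (Phihat Phi : (Fin 2 → ℝ) → (Fin 2 → ℝ))
    (hPiola : ∀ y : Fin 2 → ℝ, Phi (J *ᵥ y + b) = (J.det)⁻¹ • (J *ᵥ Phihat y))
    (ehat e that t nhat n : Fin 2 → ℝ)
    (hehat : ehat ≠ 0)
    (he : e = J *ᵥ ehat)
    (hthat : that = (enorm2 ehat)⁻¹ • ehat)
    (ht : t = (enorm2 e)⁻¹ • e)
    (hnhat : nhat = Rrot *ᵥ that)
    (hn : n = Rrot *ᵥ t)
    (xhat x : Fin 2 → ℝ)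
    (hx : x = J *ᵥ xhat + b) :
    enorm2 e * (Phi x ⬝ᵥ n) = enorm2 ehat * (Phihat xhat ⬝ᵥ nhat) :=
  stmt_3_general J b hJ Phihat Phi hPiola ehat e that t nhat n he hthat ht hnhat hn xhat x hx
end

section
/- With τ = (1/(det J)²) J (τ̂ ∘ F⁻¹) Jᵀ the double contravariant Piola image of a symmetric matrix field τ̂, and e = J ê with normal n and tangent t, one has ‖e‖² nᵀ τ(x) t = (‖ê‖²/det J) n̂ᵀ τ̂(x̂) (Jᵀ J) t̂ at corresponding points. -/
/-!
Writing `t = e / ‖e‖` and `n = R t`, the factor `‖e‖²` cancels the normalisations, so the left side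
is `(R e)ᵀ τ e`. Under the Piola transform this is `(det J)⁻² (R J ê)ᵀ J τ̂ Jᵀ J ê`, and since
`(R J ê)ᵀ J = (det J) (R ê)ᵀ` for every 2×2 matrix `J`, one power of `det J` survives.
-/

open Matrix

-- `(Rrot *ᵥ v) ⬝ᵥ w = det ![w, v]`, which `J` scales by `det J`.
lemma Rrot_mulVec_mulVec_dotProduct_mulVec (J : Matrix (Fin 2) (Fin 2) ℝ) (v w : Fin 2 → ℝ) :
    (Rrot *ᵥ (J *ᵥ v)) ⬝ᵥ (J *ᵥ w) = J.det * ((Rrot *ᵥ v) ⬝ᵥ w) := by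
  simp only [Rrot, det_fin_two, mulVec, dotProduct, Fin.sum_univ_two, of_apply, cons_val',
    cons_val_zero, cons_val_one, cons_val_fin_one, empty_val']
  ring

lemma enorm2_sq_mul_Rrot_normalize_dotProduct (A : Matrix (Fin 2) (Fin 2) ℝ) (v : Fin 2 → ℝ) :
    enorm2 v ^ 2 * ((Rrot *ᵥ (enorm2 v)⁻¹ • v) ⬝ᵥ (A *ᵥ (enorm2 v)⁻¹ • v)) =
      (Rrot *ᵥ v) ⬝ᵥ (A *ᵥ v) := by
  rcases eq_or_ne v 0 with rfl | hv
  · simp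
  · have : enorm2 v ≠ 0 := enorm2_eq_zero.not.mpr hv
    simp only [mulVec_smul, smul_dotProduct, dotProduct_smul, smul_eq_mul]
    field_simp

theorem stmt_7_general (J : Matrix (Fin 2) (Fin 2) ℝ) (b : Fin 2 → ℝ)
    (tauhat tau : (Fin 2 → ℝ) → Matrix (Fin 2) (Fin 2) ℝ)
    (hPiola : ∀ y : Fin 2 → ℝ,
      tau (J *ᵥ y + b) = ((J.det) ^ 2)⁻¹ • (J * tauhat y * Jᵀ))
    (ehat e that t nhat n : Fin 2 → ℝ)
    (he : e = J *ᵥ ehat)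
    (hthat : that = (enorm2 ehat)⁻¹ • ehat)
    (ht : t = (enorm2 e)⁻¹ • e)
    (hnhat : nhat = Rrot *ᵥ that)
    (hn : n = Rrot *ᵥ t)
    (xhat x : Fin 2 → ℝ)
    (hx : x = J *ᵥ xhat + b) :
    enorm2 e ^ 2 * (n ⬝ᵥ (tau x *ᵥ t)) =
      (enorm2 ehat ^ 2 / J.det) * (nhat ⬝ᵥ ((tauhat xhat * (Jᵀ * J)) *ᵥ that)) := by
  subst he hthat ht hnhat hn hx
  rw [hPiola, enorm2_sq_mul_Rrot_normalize_dotProduct, div_mul_eq_mul_div,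
    enorm2_sq_mul_Rrot_normalize_dotProduct]
  have hpull :
      (J * tauhat xhat * Jᵀ) *ᵥ (J *ᵥ ehat) = J *ᵥ ((tauhat xhat * (Jᵀ * J)) *ᵥ ehat) := by
    simp only [mulVec_mulVec, Matrix.mul_assoc]
  rw [smul_mulVec, dotProduct_smul, hpull, Rrot_mulVec_mulVec_dotProduct_mulVec, smul_eq_mul]
  rcases eq_or_ne J.det 0 with h | h
  · simp [h]
  · field_simp

theorem stmt_7 (J : Matrix (Fin 2) (Fin 2) ℝ) (b : Fin 2 → ℝ)
    (hJ : IsUnit J.det)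
    (tauhat tau : (Fin 2 → ℝ) → Matrix (Fin 2) (Fin 2) ℝ)
    (hsym : ∀ y, (tauhat y)ᵀ = tauhat y)
    (hPiola : ∀ y : Fin 2 → ℝ,
      tau (J *ᵥ y + b) = ((J.det) ^ 2)⁻¹ • (J * tauhat y * Jᵀ))
    (ehat e that t nhat n : Fin 2 → ℝ)
    (hehat : ehat ≠ 0)
    (he : e = J *ᵥ ehat)
    (hthat : that = (enorm2 ehat)⁻¹ • ehat)
    (ht : t = (enorm2 e)⁻¹ • e)
    (hnhat : nhat = Rrot *ᵥ that)
    (hn : n = Rrot *ᵥ t)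
    (xhat x : Fin 2 → ℝ)
    (hx : x = J *ᵥ xhat + b) :
    enorm2 e ^ 2 * (n ⬝ᵥ (tau x *ᵥ t)) =
      (enorm2 ehat ^ 2 / J.det) * (nhat ⬝ᵥ ((tauhat xhat * (Jᵀ * J)) *ᵥ that)) :=
  stmt_7_general J b tauhat tau hPiola ehat e that t nhat n he hthat ht hnhat hn xhat x hx
end

section
/- Let φ̂ : ℝ² → ℝ be twice continuously differentiable, F(x̂) = J x̂ + b affine with invertible J, and φ = φ̂ ∘ F⁻¹. Define the Airy operator airy ψ = [[∂²ψ/∂y², -∂²ψ/∂x∂y],[-∂²ψ/∂x∂y, ∂²ψ/∂x²]]. Then airy φ = (1/(det J)²) J ((airy φ̂) ∘ F⁻¹) Jᵀ, i.e. the Airy stress of the pullback equals the double contravariant Piola image of the reference Airy stress. -/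
/-!
The Airy stress of a `C²` field is the adjugate of its Hessian. Under the affine change of
variables the Hessian transforms as `J⁻ᵀ H J⁻¹`; the adjugate reverses products and commutes
with transposition, and in dimension two `adj (J⁻¹) = (det J)⁻¹ • J`.
-/

open Matrix

/-- Partial derivative in coordinate direction `i` of a scalar field on ℝ². -/
noncomputable def pd (i : Fin 2) (f : (Fin 2 → ℝ) → ℝ) (x : Fin 2 → ℝ) : ℝ :=
  fderiv ℝ f x (Pi.single i 1)

/-- The Airy stress of a scalar field: [[ψ_yy, -ψ_xy],[-ψ_xy, ψ_xx]]. -/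
noncomputable def airy (ψ : (Fin 2 → ℝ) → ℝ) (x : Fin 2 → ℝ) :
    Matrix (Fin 2) (Fin 2) ℝ :=
  !![pd 1 (pd 1 ψ) x, -(pd 0 (pd 1 ψ) x);
     -(pd 0 (pd 1 ψ) x), pd 0 (pd 0 ψ) x]

lemma adjugate_transpose_mul_mul {n α : Type*} [Fintype n] [DecidableEq n] [CommRing α]
    (A H : Matrix n n α) :
    (Aᵀ * H * A).adjugate = A.adjugate * H.adjugate * A.adjugateᵀ := by
  rw [adjugate_mul_distrib, adjugate_mul_distrib, adjugate_transpose, mul_assoc]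

lemma adjugate_inv_fin_two {α : Type*} [Field α] (A : Matrix (Fin 2) (Fin 2) α) :
    A⁻¹.adjugate = A.det⁻¹ • A := by
  rw [inv_def, Ring.inverse_eq_inv', adjugate_smul, adjugate_adjugate _ (by simp)]
  simp

noncomputable def hessian (ψ : (Fin 2 → ℝ) → ℝ) (x : Fin 2 → ℝ) : Matrix (Fin 2) (Fin 2) ℝ :=
  of fun i j => pd i (pd j ψ) x

lemma pd_pd_eq_fderiv_fderiv {f : (Fin 2 → ℝ) → ℝ} {x : Fin 2 → ℝ}
    (hf : DifferentiableAt ℝ (fderiv ℝ f) x) (i j : Fin 2) :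
    pd i (pd j f) x = fderiv ℝ (fderiv ℝ f) x (Pi.single i 1) (Pi.single j 1) := by
  unfold pd
  rw [fderiv_clm_apply hf (differentiableAt_const _)]
  simp

lemma pd_pd_comm {f : (Fin 2 → ℝ) → ℝ} (hf : ContDiff ℝ 2 f) (x : Fin 2 → ℝ) (i j : Fin 2) :
    pd i (pd j f) x = pd j (pd i f) x := by
  have hf' : DifferentiableAt ℝ (fderiv ℝ f) x :=
    (hf.fderiv_right (m := 1) (by norm_num)).differentiable (by norm_num) x
  rw [pd_pd_eq_fderiv_fderiv hf', pd_pd_eq_fderiv_fderiv hf',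
    hf.contDiffAt.isSymmSndFDerivAt (by simp)]

lemma airy_eq_adjugate_hessian {ψ : (Fin 2 → ℝ) → ℝ} (hψ : ContDiff ℝ 2 ψ) (x : Fin 2 → ℝ) :
    airy ψ x = (hessian ψ x).adjugate := by
  ext i j
  fin_cases i <;> fin_cases j <;> simp [airy, hessian, adjugate_fin_two, pd_pd_comm hψ x 1 0]

lemma contDiff_pd {f : (Fin 2 → ℝ) → ℝ} (hf : ContDiff ℝ 2 f) (i : Fin 2) :
    ContDiff ℝ 1 (pd i f) :=
  (ContinuousLinearMap.apply ℝ ℝ (Pi.single i 1)).contDiff.comp (hf.fderiv_right le_rfl)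

lemma pd_sum_const_mul {ι : Type*} (s : Finset ι) (c : ι → ℝ) {g : ι → (Fin 2 → ℝ) → ℝ}
    (hg : ∀ k, Differentiable ℝ (g k)) (m : Fin 2) (y : Fin 2 → ℝ) :
    pd m (fun z => ∑ k ∈ s, c k * g k z) y = ∑ k ∈ s, c k * pd m (g k) y := by
  unfold pd
  rw [fderiv_fun_sum fun k _ => ((hg k).const_mul (c k)) y]
  simp [fderiv_const_mul (hg _ y)]

lemma hasFDerivAt_mulVec_sub (A : Matrix (Fin 2) (Fin 2) ℝ) (b x : Fin 2 → ℝ) :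
    HasFDerivAt (fun x => A *ᵥ (x - b)) (LinearMap.toContinuousLinearMap A.mulVecLin) x := by
  simpa [Function.comp_def] using
    (LinearMap.toContinuousLinearMap A.mulVecLin).hasFDerivAt.comp x
      ((hasFDerivAt_id x).sub_const b)

lemma pd_comp_affine {f : (Fin 2 → ℝ) → ℝ} (hf : Differentiable ℝ f)
    (A : Matrix (Fin 2) (Fin 2) ℝ) (b : Fin 2 → ℝ) (i : Fin 2) (x : Fin 2 → ℝ) :
    pd i (fun x => f (A *ᵥ (x - b))) x = ∑ k, A k i * pd k f (A *ᵥ (x - b)) := by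
  have hcomp : HasFDerivAt (fun x => f (A *ᵥ (x - b)))
      ((fderiv ℝ f (A *ᵥ (x - b))).comp (LinearMap.toContinuousLinearMap A.mulVecLin)) x :=
    (hf _).hasFDerivAt.comp x (hasFDerivAt_mulVec_sub A b x)
  unfold pd
  rw [hcomp.fderiv]
  simp only [ContinuousLinearMap.comp_apply, LinearMap.coe_toContinuousLinearMap', mulVecLin_apply,
    mulVec_single_one]
  conv_lhs => rw [← Finset.univ_sum_single (A.col i), map_sum]
  refine Finset.sum_congr rfl fun k _ => ?_
  rw [← smul_eq_mul, ← map_smul, ← Pi.single_smul', smul_eq_mul, mul_one, col_apply]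

lemma hessian_comp_affine {f : (Fin 2 → ℝ) → ℝ} (hf : ContDiff ℝ 2 f)
    (A : Matrix (Fin 2) (Fin 2) ℝ) (b x : Fin 2 → ℝ) :
    hessian (fun x => f (A *ᵥ (x - b))) x = Aᵀ * hessian f (A *ᵥ (x - b)) * A := by
  have hpd (k : Fin 2) : Differentiable ℝ (pd k f) := (contDiff_pd hf k).differentiable one_ne_zero
  have hgrad (j : Fin 2) : pd j (fun x => f (A *ᵥ (x - b))) =
      fun x => (fun y => ∑ k, A k j * pd k f y) (A *ᵥ (x - b)) :=
    funext (pd_comp_affine (hf.differentiable two_ne_zero) A b j)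
  ext i j
  calc pd i (pd j fun x => f (A *ᵥ (x - b))) x
      = pd i (fun x => (fun y => ∑ k, A k j * pd k f y) (A *ᵥ (x - b))) x := by rw [hgrad]
    _ = ∑ l, A l i * ∑ k, A k j * pd l (pd k f) (A *ᵥ (x - b)) := by
      rw [pd_comp_affine (f := fun y => ∑ k, A k j * pd k f y) (by fun_prop)]
      simp only [pd_sum_const_mul _ _ hpd]
    _ = (Aᵀ * hessian f (A *ᵥ (x - b)) * A) i j := by
      simp only [hessian, mul_apply, transpose_apply, of_apply, Fin.sum_univ_two]
      ring

theorem stmt_14_general (J : Matrix (Fin 2) (Fin 2) ℝ) (b : Fin 2 → ℝ)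
    (φhat : (Fin 2 → ℝ) → ℝ)
    (hreg : ContDiff ℝ 2 φhat)
    (φ : (Fin 2 → ℝ) → ℝ)
    (hφ : ∀ x, φ x = φhat (J⁻¹ *ᵥ (x - b))) :
    ∀ x, airy φ x = ((J.det) ^ 2)⁻¹ • (J * airy φhat (J⁻¹ *ᵥ (x - b)) * Jᵀ) := by
  obtain rfl : φ = fun x => φhat (J⁻¹ *ᵥ (x - b)) := funext hφ
  intro x
  have hφreg : ContDiff ℝ 2 fun x => φhat (J⁻¹ *ᵥ (x - b)) :=
    hreg.comp (J⁻¹.mulVecLin.toContinuousLinearMap.contDiff.comp (contDiff_id.sub contDiff_const))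
  rw [airy_eq_adjugate_hessian hφreg, hessian_comp_affine hreg, adjugate_transpose_mul_mul,
    adjugate_inv_fin_two, ← airy_eq_adjugate_hessian hreg]
  simp [transpose_smul, smul_smul, pow_two]

theorem stmt_14 (J : Matrix (Fin 2) (Fin 2) ℝ) (b : Fin 2 → ℝ)
    (hJ : IsUnit J.det)
    (φhat : (Fin 2 → ℝ) → ℝ)
    (hreg : ContDiff ℝ 2 φhat)
    (φ : (Fin 2 → ℝ) → ℝ)
    (hφ : ∀ x, φ x = φhat (J⁻¹ *ᵥ (x - b))) :
    ∀ x, airy φ x = ((J.det) ^ 2)⁻¹ • (J * airy φhat (J⁻¹ *ᵥ (x - b)) * Jᵀ) :=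
  stmt_14_general J b φhat hreg φ hφ
end
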